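/- Define h₀ = φ₀'/φ₀ (well defined since φ₀ > 0). Then: (1) h₀(x) ≤ 0 for all x ≥ 0, and φ₀(x) = φ₀(0)·exp(∫₀ˣ h₀(y) dy) for all x ∈ ℝ; (2) h₀ satisfies the Riccati equation h₀'(x) + h₀(x)² = μ₀² + V(x) for all x ≥ 0, together with h₀(0) = 0; (3) for all x ≥ 0 one has the integral formula h₀'(x) = −(1/φ₀(x)²)·∫ₓ^∞ V'(y)·φ₀(y)² dy. -/

import Mathlib

open Real MeasureTheory Filter

noncomputable def Qs (x : ℝ) : ℝ := (3/2) * (1 / Real.cosh (x/2))^2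
noncomputable def Hs (x : ℝ) : ℝ := Real.tanh (x/2)
noncomputable def alphaFn (x : ℝ) : ℝ := (1/3) * (Real.sinh x + x)
noncomputable def alphaInv : ℝ → ℝ := Function.invFun alphaFn
noncomputable def Qt (x : ℝ) : ℝ := Qs (alphaInv x)
noncomputable def Ht (x : ℝ) : ℝ := Hs (alphaInv x)
noncomputable def Vpot (x : ℝ) : ℝ := 2 * (Qt x)^2 * (1 - Qt x)

open Topology Set

/-! With `W = μ₀² + V` the eigenvalue equation reads `φ₀'' = W φ₀`, so `h₀ = φ₀'/φ₀` satisfies the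
Riccati equation `h₀' = W - h₀²`, and `W φ₀² - φ₀'²` has derivative `V' φ₀²` and vanishes at
infinity; integrating it over `(x, ∞)` gives the formula for `h₀'`.

For the sign of `φ₀'`: on `[0, ∞)` the distorted soliton `Q̃` decreases and `q ↦ 2q²(1 - q)`
decreases for `q ≥ 1`, so `{W ≤ 0} ∩ [0, ∞)` is an initial segment. On it `φ₀'' ≤ 0`, so `φ₀'`
decreases from `φ₀'(0) = 0` (evenness); beyond it `φ₀'' > 0`, so `φ₀'` increases to its limit `0`. -/

lemma hasDerivAt_alphaFn (u : ℝ) : HasDerivAt alphaFn ((cosh u + 1) / 3) u := by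
  have h := ((hasDerivAt_sinh u).add (hasDerivAt_id' u)).const_mul (1 / 3 : ℝ)
  exact h.congr_deriv (by ring)

lemma strictMono_alphaFn : StrictMono alphaFn :=
  strictMono_of_deriv_pos fun u => by
    rw [(hasDerivAt_alphaFn u).deriv]; have := cosh_pos u; positivity

lemma surjective_alphaFn : Function.Surjective alphaFn := by
  have hcont : Continuous alphaFn := by unfold alphaFn; fun_prop
  refine hcont.surjective ?_ ?_
  · refine tendsto_atTop_mono' _ ?_ (tendsto_id.atTop_div_const (by norm_num : (0:ℝ) < 3))
    filter_upwards [eventually_ge_atTop 0] with x hx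
    have := sinh_nonneg_iff.mpr hx
    simp only [alphaFn, id]; linarith
  · refine tendsto_atBot_mono' _ ?_ (tendsto_id.atBot_div_const (by norm_num : (0:ℝ) < 3))
    filter_upwards [eventually_le_atBot 0] with x hx
    have := sinh_nonpos_iff.mpr hx
    simp only [alphaFn, id]; linarith

lemma alphaFn_alphaInv (y : ℝ) : alphaFn (alphaInv y) = y :=
  Function.rightInverse_invFun surjective_alphaFn y

lemma alphaInv_alphaFn (x : ℝ) : alphaInv (alphaFn x) = x :=
  Function.leftInverse_invFun strictMono_alphaFn.injective x

lemma strictMono_alphaInv : StrictMono alphaInv := fun a b hab => by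
  rw [← strictMono_alphaFn.lt_iff_lt, alphaFn_alphaInv, alphaFn_alphaInv]; exact hab

lemma alphaInv_zero : alphaInv 0 = 0 := by
  simpa [alphaFn] using alphaInv_alphaFn 0

lemma continuous_alphaInv : Continuous alphaInv :=
  strictMono_alphaInv.monotone.continuous_of_surjective
    (Function.LeftInverse.surjective alphaInv_alphaFn)

lemma hasDerivAt_alphaInv (x : ℝ) :
    HasDerivAt alphaInv (3 / (cosh (alphaInv x) + 1)) x := by
  have h := HasDerivAt.of_local_left_inverse continuous_alphaInv.continuousAt
    (hasDerivAt_alphaFn (alphaInv x)) (by have := cosh_pos (alphaInv x); positivity)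
    (Eventually.of_forall alphaFn_alphaInv)
  rwa [inv_div] at h

lemma hasDerivAt_Qs (u : ℝ) : HasDerivAt Qs (-(Qs u * Hs u)) u := by
  have hc : cosh (u / 2) ≠ 0 := (cosh_pos _).ne'
  have h := (((hasDerivAt_const u (1 : ℝ)).div ((hasDerivAt_id' u).div_const 2).cosh hc).pow 2
    |>.const_mul (3 / 2 : ℝ))
  refine h.congr_deriv ?_
  simp only [Qs, Hs, tanh_eq_sinh_div_cosh, Pi.div_apply]
  norm_num
  field_simp

lemma Qs_pos (u : ℝ) : 0 < Qs u := by unfold Qs; have := cosh_pos (u / 2); positivity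

lemma Qs_le (u : ℝ) : Qs u ≤ 3 / 2 := by
  have : 1 / cosh (u / 2) ≤ 1 := div_le_one_of_le₀ (one_le_cosh _) (cosh_pos _).le
  unfold Qs
  have := cosh_pos (u / 2)
  nlinarith [one_div_pos.mpr this]

lemma antitoneOn_Qs : AntitoneOn Qs (Ici 0) := fun c hc b hb hcb => by
  have : cosh (c / 2) ≤ cosh (b / 2) := by
    rw [cosh_le_cosh, abs_of_nonneg (by simp at hc; linarith),
      abs_of_nonneg (by simp at hb; linarith)]
    linarith
  unfold Qs
  gcongr

lemma abs_Hs_le (u : ℝ) : |Hs u| ≤ 1 := (abs_tanh_lt_one _).le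

lemma alphaInv_nonneg {x : ℝ} (hx : 0 ≤ x) : 0 ≤ alphaInv x :=
  alphaInv_zero ▸ strictMono_alphaInv.monotone hx

lemma antitoneOn_Qt : AntitoneOn Qt (Ici 0) := fun _ hc _ hb hcb =>
  antitoneOn_Qs (alphaInv_nonneg hc) (alphaInv_nonneg hb) (strictMono_alphaInv.monotone hcb)

-- `V(b) ≤ 0` forces `Q̃(b) ≥ 1`, and `q ↦ 2q²(1 - q)` is decreasing on `[1, ∞)`.
lemma Vpot_le_of_le {c b : ℝ} (hc : 0 ≤ c) (hcb : c ≤ b) (hb : Vpot b ≤ 0) :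
    Vpot c ≤ Vpot b := by
  have hQ : Qt b ≤ Qt c := antitoneOn_Qt hc (hc.trans hcb) hcb
  have hQb : 1 ≤ Qt b := by
    by_contra! h
    have := mul_pos (pow_pos (Qs_pos (alphaInv b)) 2) (sub_pos.mpr h)
    unfold Vpot at hb
    unfold Qt at *
    linarith
  have hQc : 1 ≤ Qt c := hQb.trans hQ
  have hdiff : Vpot c - Vpot b
      = -2 * (Qt c - Qt b) * (Qt c * (Qt c - 1) + Qt b * (Qt b - 1) + Qt c * Qt b) := by
    unfold Vpot; ring
  have := mul_nonneg (sub_nonneg.mpr hQ)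
    (by positivity : 0 ≤ Qt c * (Qt c - 1) + Qt b * (Qt b - 1) + Qt c * Qt b)
  linarith

lemma abs_Vpot_le (x : ℝ) : |Vpot x| ≤ 3 := by
  have h0 := Qs_pos (alphaInv x)
  have h1 := Qs_le (alphaInv x)
  unfold Vpot Qt
  rw [abs_le]; constructor <;> nlinarith

lemma hasDerivAt_Vpot (x : ℝ) : HasDerivAt Vpot
    ((4 * Qt x - 6 * Qt x ^ 2) * (-(Qt x * Ht x) * (3 / (cosh (alphaInv x) + 1)))) x := by
  have hQt : HasDerivAt Qt (-(Qt x * Ht x) * (3 / (cosh (alphaInv x) + 1))) x :=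
    (hasDerivAt_Qs _).comp x (hasDerivAt_alphaInv x)
  have h := ((hQt.fun_pow 2).const_mul 2).mul (hQt.const_sub 1)
  exact h.congr_deriv (by ring)

lemma differentiable_Vpot : Differentiable ℝ Vpot := fun x => (hasDerivAt_Vpot x).differentiableAt

lemma deriv_Vpot : deriv Vpot = fun x =>
    (4 * Qt x - 6 * Qt x ^ 2) * (-(Qt x * Ht x) * (3 / (cosh (alphaInv x) + 1))) :=
  funext fun x => (hasDerivAt_Vpot x).deriv

lemma continuous_deriv_Vpot : Continuous (deriv Vpot) := by
  have := continuous_alphaInv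
  have hQt : Continuous Qt := by
    unfold Qt Qs; fun_prop (disch := intro; positivity)
  have hHt : Continuous Ht := by
    unfold Ht Hs; simp only [tanh_eq_sinh_div_cosh]; fun_prop (disch := intro; positivity)
  rw [deriv_Vpot]
  exact (by fun_prop : Continuous fun x => 4 * Qt x - 6 * Qt x ^ 2).mul
    ((by fun_prop : Continuous fun x => -(Qt x * Ht x)).mul
      (continuous_const.div (by fun_prop) fun x => by have := cosh_pos (alphaInv x); positivity))

lemma abs_deriv_Vpot_le (x : ℝ) : |deriv Vpot x| ≤ 17 := by
  have h0 := Qs_pos (alphaInv x)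
  have h1 := Qs_le (alphaInv x)
  have hp : |4 * Qt x - 6 * Qt x ^ 2| ≤ 15 / 2 := by
    unfold Qt; rw [abs_le]; constructor <;> nlinarith
  have hq : |Qt x| ≤ 3 / 2 := by unfold Qt; rw [abs_of_pos h0]; exact h1
  have hk : |3 / (cosh (alphaInv x) + 1)| ≤ 3 / 2 := by
    have := one_le_cosh (alphaInv x)
    rw [abs_of_pos (by positivity), div_le_div_iff_of_pos_left] <;> linarith
  rw [deriv_Vpot, abs_mul, abs_mul, abs_neg, abs_mul]
  have : |Ht x| ≤ 1 := abs_Hs_le _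
  have : |4 * Qt x - 6 * Qt x ^ 2| * (|Qt x| * |Ht x| * |3 / (cosh (alphaInv x) + 1)|)
      ≤ 15 / 2 * (3 / 2 * 1 * (3 / 2)) := by
    gcongr
  linarith

section LogDeriv

variable {φ : ℝ → ℝ}

lemma deriv_zero_of_even (heven : ∀ x, φ (-x) = φ x) : deriv φ 0 = 0 := by
  have h := deriv_comp_neg (f := φ) (x := 0)
  simp only [heven, neg_zero] at h
  linarith

lemma tendsto_zero_of_abs_le_exp {C c : ℝ} (hc : c < 0)
    (h : ∀ x, |φ x| ≤ C * exp (c * |x|)) :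
    Tendsto φ atTop (𝓝 0) := by
  have hexp : Tendsto (fun x => C * exp (c * x)) atTop (𝓝 0) := by
    simpa using (tendsto_exp_atBot.comp (tendsto_id.const_mul_atTop_of_neg hc)).const_mul C
  refine squeeze_zero_norm' ?_ hexp
  filter_upwards [eventually_ge_atTop 0] with x hx
  simpa [abs_of_nonneg hx] using h x

lemma tendsto_mul_sq_sub_sq {α : Type*} {l : Filter α} {W f g : α → ℝ} {M : ℝ}
    (hW : ∀ y, |W y| ≤ M) (hf : Tendsto f l (𝓝 0)) (hg : Tendsto g l (𝓝 0)) :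
    Tendsto (fun y => W y * f y ^ 2 - g y ^ 2) l (𝓝 0) := by
  have hf2 : Tendsto (fun y => f y ^ 2) l (𝓝 0) := by simpa using hf.pow 2
  have hg2 : Tendsto (fun y => g y ^ 2) l (𝓝 0) := by simpa using hg.pow 2
  simpa only [sub_zero] using
    (isBoundedUnder_le_mul_tendsto_zero (isBoundedUnder_of ⟨M, hW⟩) hf2).sub hg2

lemma eq_mul_exp_integral_logDeriv (hd : Differentiable ℝ φ) (hcont : Continuous (deriv φ))
    (hpos : ∀ x, 0 < φ x) (a b : ℝ) :
    φ b = φ a * exp (∫ y in a..b, logDeriv φ y) := by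
  have hne : ∀ x, φ x ≠ 0 := fun x => (hpos x).ne'
  simp only [logDeriv_apply]
  rw [intervalIntegral.integral_eq_sub_of_hasDerivAt (fun y _ => (hd y).hasDerivAt.log (hne y))
    ((hcont.div hd.continuous hne).intervalIntegrable a b), exp_sub, exp_log (hpos b),
    exp_log (hpos a)]
  field_simp [hne a]

lemma deriv_logDeriv_of_deriv_deriv_eq {x w : ℝ} (hd : DifferentiableAt ℝ φ x)
    (hd' : DifferentiableAt ℝ (deriv φ) x) (hx : φ x ≠ 0) (hode : deriv (deriv φ) x = w * φ x) :
    deriv (logDeriv φ) x = (w * φ x ^ 2 - deriv φ x ^ 2) / φ x ^ 2 :=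
  (hd'.hasDerivAt.div hd.hasDerivAt hx).deriv.trans (by rw [hode]; ring)

lemma nonpos_of_deriv_eq_mul {W p : ℝ → ℝ} (hd : Differentiable ℝ φ)
    (hderiv : ∀ x, deriv φ x = W x * p x) (hp : ∀ x, 0 < p x)
    (hW : ∀ c b, 0 ≤ c → c ≤ b → W b ≤ 0 → W c ≤ 0)
    (h0 : φ 0 = 0) (hlim : Tendsto φ atTop (𝓝 0)) {a : ℝ} (ha : 0 ≤ a) : φ a ≤ 0 := by
  by_cases h : ∃ b, a ≤ b ∧ W b ≤ 0
  · obtain ⟨b, hab, hb⟩ := h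
    have hanti : AntitoneOn φ (Icc 0 b) :=
      antitoneOn_of_deriv_nonpos (convex_Icc 0 b) hd.continuous.continuousOn
        hd.differentiableOn fun x hx => by
          rw [interior_Icc] at hx
          rw [hderiv]
          exact mul_nonpos_of_nonpos_of_nonneg (hW x b hx.1.le hx.2.le hb) (hp x).le
    simpa [h0] using hanti ⟨le_rfl, ha.trans hab⟩ ⟨ha, hab⟩ ha
  · push Not at h
    have hmono : MonotoneOn φ (Ici a) :=
      monotoneOn_of_deriv_nonneg (convex_Ici a) hd.continuous.continuousOn
        hd.differentiableOn fun x hx => by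
          rw [interior_Ici] at hx
          rw [hderiv]
          exact mul_nonneg (h x hx.le).le (hp x).le
    exact ge_of_tendsto hlim ((eventually_ge_atTop a).mono fun x hx => hmono self_mem_Ici hx hx)

lemma integral_Ioi_deriv_mul_sq {W W' : ℝ → ℝ} (hd : Differentiable ℝ φ)
    (hd' : Differentiable ℝ (deriv φ)) (hW : ∀ x, HasDerivAt W (W' x) x)
    (hode : ∀ x, deriv (deriv φ) x = W x * φ x) {a : ℝ}
    (hint : IntegrableOn (fun y => W' y * φ y ^ 2) (Ioi a))
    (hlim : Tendsto (fun y => W y * φ y ^ 2 - deriv φ y ^ 2) atTop (𝓝 0)) :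
    ∫ y in Ioi a, W' y * φ y ^ 2 = deriv φ a ^ 2 - W a * φ a ^ 2 := by
  rw [integral_Ioi_of_hasDerivAt_of_tendsto' (fun y _ => ?_) hint hlim, zero_sub, neg_sub]
  refine (((hW y).mul ((hd y).hasDerivAt.fun_pow 2)).sub
    ((hd' y).hasDerivAt.fun_pow 2)).congr_deriv ?_
  rw [hode]
  push_cast
  ring

end LogDeriv

theorem log_derivative_properties_general (φ₀ : ℝ → ℝ) (μ₀ : ℝ)
    (hC2 : ContDiff ℝ 2 φ₀) (hpos : ∀ x : ℝ, 0 < φ₀ x)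
    (heven : ∀ x : ℝ, φ₀ (-x) = φ₀ x)
    (hL2 : Integrable (fun x => (φ₀ x)^2))
    (hμ1 : (0.808:ℝ) ≤ μ₀)
    (heq : ∀ x : ℝ, -(deriv (deriv φ₀) x) + Vpot x * φ₀ x = -μ₀^2 * φ₀ x)
    (hdecay : ∃ C > (0:ℝ), ∀ x : ℝ,
      |φ₀ x| + |deriv φ₀ x| ≤ C * Real.exp (-(Real.sqrt 2 / 2) * μ₀ * |x|)) :
    (∀ x : ℝ, 0 ≤ x → deriv φ₀ x / φ₀ x ≤ 0) ∧
    (∀ x : ℝ, φ₀ x = φ₀ 0 * Real.exp (∫ y in (0:ℝ)..x, deriv φ₀ y / φ₀ y)) ∧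
    (∀ x : ℝ, 0 ≤ x →
      deriv (fun y => deriv φ₀ y / φ₀ y) x + (deriv φ₀ x / φ₀ x)^2 = μ₀^2 + Vpot x) ∧
    deriv φ₀ 0 / φ₀ 0 = 0 ∧
    (∀ x : ℝ, 0 ≤ x →
      deriv (fun y => deriv φ₀ y / φ₀ y) x
        = -(1 / (φ₀ x)^2) * ∫ y in Set.Ioi x, deriv Vpot y * (φ₀ y)^2) := by
  obtain ⟨C, -, hdec⟩ := hdecay
  have hd : Differentiable ℝ φ₀ := hC2.differentiable two_ne_zero
  have hd' : Differentiable ℝ (deriv φ₀) := (hC2.deriv' (n := 1)).differentiable one_ne_zero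
  have hne : ∀ x, φ₀ x ≠ 0 := fun x => (hpos x).ne'
  have hode : ∀ x, deriv (deriv φ₀) x = (μ₀ ^ 2 + Vpot x) * φ₀ x := fun x => by
    linarith [heq x]
  have hrate : -(√2 / 2) * μ₀ < 0 := by
    have : 0 < √2 := by positivity
    nlinarith
  have hφ : Tendsto φ₀ atTop (𝓝 0) := tendsto_zero_of_abs_le_exp (C := C) hrate fun x => by
    linarith [hdec x, abs_nonneg (deriv φ₀ x)]
  have hφ' : Tendsto (deriv φ₀) atTop (𝓝 0) := tendsto_zero_of_abs_le_exp (C := C) hrate fun x => by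
    linarith [hdec x, abs_nonneg (φ₀ x)]
  have hW : ∀ x, HasDerivAt (fun y => μ₀ ^ 2 + Vpot y) (deriv Vpot x) x := fun x =>
    (differentiable_Vpot x).hasDerivAt.const_add _
  have hlog : ∀ x, deriv (fun y => deriv φ₀ y / φ₀ y) x
      = ((μ₀ ^ 2 + Vpot x) * φ₀ x ^ 2 - deriv φ₀ x ^ 2) / φ₀ x ^ 2 := fun x =>
    deriv_logDeriv_of_deriv_deriv_eq (hd x) (hd' x) (hne x) (hode x)
  refine ⟨fun x hx => div_nonpos_of_nonpos_of_nonneg ?_ (hpos x).le,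
    eq_mul_exp_integral_logDeriv hd hd'.continuous hpos 0, fun x _ => ?_,
    by rw [deriv_zero_of_even heven, zero_div], fun x _ => ?_⟩
  · refine nonpos_of_deriv_eq_mul hd' hode hpos (fun c b hc hcb hb => ?_)
      (deriv_zero_of_even heven) hφ' hx
    nlinarith [Vpot_le_of_le hc hcb (by nlinarith : Vpot b ≤ 0)]
  · rw [hlog]
    field_simp [hne x]
    ring
  · have hint : IntegrableOn (fun y => deriv Vpot y * φ₀ y ^ 2) (Ioi x) :=
      (hL2.bdd_mul continuous_deriv_Vpot.aestronglyMeasurable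
        (ae_of_all _ abs_deriv_Vpot_le)).integrableOn
    have hlim : Tendsto (fun y => (μ₀ ^ 2 + Vpot y) * φ₀ y ^ 2 - deriv φ₀ y ^ 2) atTop (𝓝 0) :=
      tendsto_mul_sq_sub_sq (M := μ₀ ^ 2 + 3)
        (fun y => (abs_add_le _ _).trans (by rw [abs_sq]; linarith [abs_Vpot_le y])) hφ hφ'
    rw [hlog, integral_Ioi_deriv_mul_sq hd hd' hW hode hint hlim]
    field_simp [hne x]
    ring

/-- Properties of the logarithmic derivative `h₀ = φ₀'/φ₀`:
sign, exponential representation of `φ₀`, the Riccati equation, and the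
integral formula for `h₀'`. -/
theorem log_derivative_properties (φ₀ : ℝ → ℝ) (μ₀ : ℝ)
    (hC2 : ContDiff ℝ 2 φ₀) (hpos : ∀ x : ℝ, 0 < φ₀ x)
    (heven : ∀ x : ℝ, φ₀ (-x) = φ₀ x)
    (hL2 : Integrable (fun x => (φ₀ x)^2))
    (hμ1 : (0.808:ℝ) ≤ μ₀) (hμ2 : μ₀ ≤ (0.883:ℝ))
    (heq : ∀ x : ℝ, -(deriv (deriv φ₀) x) + Vpot x * φ₀ x = -μ₀^2 * φ₀ x)
    (hdecay : ∃ C > (0:ℝ), ∀ x : ℝ,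
      |φ₀ x| + |deriv φ₀ x| ≤ C * Real.exp (-(Real.sqrt 2 / 2) * μ₀ * |x|)) :
    (∀ x : ℝ, 0 ≤ x → deriv φ₀ x / φ₀ x ≤ 0) ∧
    (∀ x : ℝ, φ₀ x = φ₀ 0 * Real.exp (∫ y in (0:ℝ)..x, deriv φ₀ y / φ₀ y)) ∧
    (∀ x : ℝ, 0 ≤ x →
      deriv (fun y => deriv φ₀ y / φ₀ y) x + (deriv φ₀ x / φ₀ x)^2 = μ₀^2 + Vpot x) ∧
    deriv φ₀ 0 / φ₀ 0 = 0 ∧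
    (∀ x : ℝ, 0 ≤ x →
      deriv (fun y => deriv φ₀ y / φ₀ y) x
        = -(1 / (φ₀ x)^2) * ∫ y in Set.Ioi x, deriv Vpot y * (φ₀ y)^2) :=
  log_derivative_properties_general φ₀ μ₀ hC2 hpos heven hL2 hμ1 heq hdecay
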